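/- Let T1, T2 be bounded linear operators on H with A-adjoints S1 = T1^{#_A}, S2 = T2^{#_A} (i.e. A∘S_i = T_i*∘A and range(S_i) ⊆ closure(range A)). Then max(‖T1+T2‖_A², ‖T1-T2‖_A²) ≥ max(‖T1² + T2²‖_A, ‖S1∘T1 + S2∘T2‖_A, ‖T1∘S1 + T2∘S2‖_A) + |‖T1+T2‖_A² - ‖T1-T2‖_A²| / 2. -/

import Mathlib

/-!
Put `U = T1 + T2` and `V = T1 - T2`, so that `U^# = S1 + S2` and `V^# = S1 - S2`. Then
`T1² + T2² = (U U + V V) / 2`, `S1 T1 + S2 T2 = (U^# U + V^# V) / 2` and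
`T1 S1 + T2 S2 = (U U^# + V V^#) / 2`. The `A`-seminorm is submultiplicative and
`‖T^#‖_A ≤ ‖T‖_A`, so each of the three has `A`-seminorm at most
`(‖U‖_A² + ‖V‖_A²) / 2 = max (‖U‖_A², ‖V‖_A²) - |‖U‖_A² - ‖V‖_A²| / 2`.

The analytic input is that an operator `T` with an `A`-adjoint is `A`-bounded. Cauchy–Schwarz for
`⟨A·,·⟩` gives `‖Tx‖_A² = ⟨Ax, T^# T x⟩ ≤ ‖x‖_A ‖T^# T x‖_A`, and for the `A`-selfadjoint
`P = T^# T` iterating the same inequality gives `‖Px‖_A^(2^n) ≤ ‖x‖_A^(2^n - 1) ‖P^(2^n) x‖_A`,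
whence `‖Px‖_A ≤ ‖P‖ ‖x‖_A`. Since `ker A = (range A)ᗮ`, every vector differs from one in
`closure (range A)` by a vector of `A`-seminorm zero, so `‖T‖_A` bounds `‖Tx‖_A / ‖x‖_A` for all `x`.
-/


open scoped InnerProductSpace
open ContinuousLinearMap

variable {H : Type*} [NormedAddCommGroup H] [InnerProductSpace ℂ H] [CompleteSpace H]

/-- The `A`-seminorm `‖x‖_A = √⟨Ax,x⟩`. -/
noncomputable def aNorm (A : H →L[ℂ] H) (x : H) : ℝ :=
  Real.sqrt (⟪A x, x⟫_ℂ).re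

/-- The `A`-numerical radius `w_A(T) = sup {|⟨ATx,x⟩| : x ∈ H, ‖x‖_A = 1}`. -/
noncomputable def wA (A T : H →L[ℂ] H) : ℝ :=
  sSup {r : ℝ | ∃ x : H, aNorm A x = 1 ∧ r = ‖⟪A (T x), x⟫_ℂ‖}

/-- The `A`-operator seminorm `‖T‖_A = sup {‖Tx‖_A : x ∈ closure (range A), ‖x‖_A = 1}`. -/
noncomputable def aOpNorm (A T : H →L[ℂ] H) : ℝ :=
  sSup {r : ℝ | ∃ x : H, x ∈ closure (Set.range (⇑A)) ∧ aNorm A x = 1 ∧ r = aNorm A (T x)}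

/-- The `B`-numerical radius of the operator matrix `[[T1,T2],[T3,T4]]` acting on `H ⊕ H` by
`(x, y) ↦ (T1 x + T2 y, T3 x + T4 y)`, where `B = [[A,0],[0,A]]`:
`w_B(T) = sup {|⟨BTz,z⟩| : z ∈ H ⊕ H, ‖z‖_B = 1}`. -/
noncomputable def wB (A T1 T2 T3 T4 : H →L[ℂ] H) : ℝ :=
  sSup {r : ℝ | ∃ x y : H, Real.sqrt ((⟪A x, x⟫_ℂ).re + (⟪A y, y⟫_ℂ).re) = 1 ∧
    r = ‖⟪A (T1 x + T2 y), x⟫_ℂ + ⟪A (T3 x + T4 y), y⟫_ℂ‖}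

def IsAAdjoint (A T S : H →L[ℂ] H) : Prop :=
  A ∘L S = adjoint T ∘L A

def IsABounded (A T : H →L[ℂ] H) : Prop :=
  ∃ C, ∀ x, aNorm A (T x) ≤ C * aNorm A x

section

variable {E : Type*} [NormedAddCommGroup E] [InnerProductSpace ℂ E]

lemma aNorm_nonneg (A : E →L[ℂ] E) (x : E) : 0 ≤ aNorm A x :=
  Real.sqrt_nonneg _

lemma aNorm_sq {A : E →L[ℂ] E} (hA : A.IsPositive) (x : E) : aNorm A x ^ 2 = (⟪A x, x⟫_ℂ).re :=
  Real.sq_sqrt (hA.re_inner_nonneg_left x)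

lemma aOpNorm_nonneg (A T : E →L[ℂ] E) : 0 ≤ aOpNorm A T :=
  Real.sSup_nonneg (by rintro r ⟨x, -, -, rfl⟩; exact aNorm_nonneg A _)

lemma aOpNorm_le_bound {A T : E →L[ℂ] E} {C : ℝ} (hC : 0 ≤ C)
    (h : ∀ x, aNorm A (T x) ≤ C * aNorm A x) : aOpNorm A T ≤ C :=
  Real.sSup_le (by rintro r ⟨x, -, hx, rfl⟩; simpa [hx] using h x) hC

lemma closure_range_eq_topologicalClosure (A : E →L[ℂ] E) :
    closure (Set.range A) = (LinearMap.range (A : E →ₗ[ℂ] E)).topologicalClosure := by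
  simp [Submodule.topologicalClosure_coe, LinearMap.coe_range]

lemma smul_mem_closure_range (A : E →L[ℂ] E) (c : ℂ) {y : E} (hy : y ∈ closure (Set.range A)) :
    c • y ∈ closure (Set.range A) := by
  rw [closure_range_eq_topologicalClosure] at hy ⊢
  exact Submodule.smul_mem _ c hy

end

section

variable {A : H →L[ℂ] H}

lemma inner_sqrt_apply_sqrt_apply (hA : A.IsPositive) (x y : H) :
    ⟪CFC.sqrt A x, CFC.sqrt A y⟫_ℂ = ⟪A x, y⟫_ℂ := by
  rw [← adjoint_inner_left, (IsSelfAdjoint.of_nonneg (CFC.sqrt_nonneg A)).adjoint_eq,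
    ← mul_apply_eq_comp, CFC.sqrt_mul_sqrt_self A ((nonneg_iff_isPositive A).mpr hA)]

lemma aNorm_eq_norm_sqrt_apply (hA : A.IsPositive) (x : H) : aNorm A x = ‖CFC.sqrt A x‖ := by
  rw [aNorm, ← inner_sqrt_apply_sqrt_apply hA]
  exact (congrArg Real.sqrt (inner_self_eq_norm_sq (𝕜 := ℂ) _)).trans
    (Real.sqrt_sq (norm_nonneg (CFC.sqrt A x)))

lemma norm_inner_le_aNorm_mul_aNorm (hA : A.IsPositive) (x y : H) :
    ‖⟪A x, y⟫_ℂ‖ ≤ aNorm A x * aNorm A y := by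
  rw [← inner_sqrt_apply_sqrt_apply hA, aNorm_eq_norm_sqrt_apply hA, aNorm_eq_norm_sqrt_apply hA]
  exact norm_inner_le_norm _ _

lemma aNorm_add_le (hA : A.IsPositive) (x y : H) : aNorm A (x + y) ≤ aNorm A x + aNorm A y := by
  simp only [aNorm_eq_norm_sqrt_apply hA, map_add]
  exact norm_add_le _ _

lemma aNorm_smul (hA : A.IsPositive) (c : ℂ) (x : H) : aNorm A (c • x) = ‖c‖ * aNorm A x := by
  simp only [aNorm_eq_norm_sqrt_apply hA, map_smul, norm_smul]

lemma aNorm_le_norm_sqrt_mul_norm (hA : A.IsPositive) (x : H) :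
    aNorm A x ≤ ‖CFC.sqrt A‖ * ‖x‖ :=
  (aNorm_eq_norm_sqrt_apply hA x).trans_le (le_opNorm _ _)

lemma aNorm_add_of_apply_eq_zero (hA : IsSelfAdjoint A) (y : H) {z : H} (hz : A z = 0) :
    aNorm A (y + z) = aNorm A y := by
  have hyz : ⟪A y, z⟫_ℂ = 0 := by rw [← adjoint_inner_right, hA.adjoint_eq, hz, inner_zero_right]
  rw [aNorm, aNorm, map_add, hz, add_zero, inner_add_right, hyz, add_zero]

lemma IsSelfAdjoint.exists_mem_closure_range_add (hA : IsSelfAdjoint A) (x : H) :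
    ∃ y ∈ closure (Set.range A), ∃ z, A z = 0 ∧ x = y + z := by
  set K := (LinearMap.range (A : H →ₗ[ℂ] H)).topologicalClosure
  have : CompleteSpace K := (Submodule.isClosed_topologicalClosure _).completeSpace_coe
  obtain ⟨y, hy, z, hz, rfl⟩ := K.exists_add_mem_mem_orthogonal x
  rw [Submodule.orthogonal_closure, hA.isSymmetric.orthogonal_range] at hz
  exact ⟨y, (closure_range_eq_topologicalClosure A).symm ▸ hy, z, hz, rfl⟩

end

lemma le_of_forall_pow_two_pow_le_mul_pow {a b C : ℝ} (hb : 0 ≤ b)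
    (h : ∀ n : ℕ, a ^ 2 ^ n ≤ C * b ^ 2 ^ n) : a ≤ b := by
  by_contra! hba
  rcases hb.eq_or_lt with rfl | hb
  · simpa [hba.not_ge] using h 0
  · have hab : 1 < a / b := (one_lt_div hb).mpr hba
    obtain ⟨n, hn⟩ := pow_unbounded_of_one_lt C hab
    have hC : (a / b) ^ 2 ^ n ≤ C := by
      rw [div_pow, div_le_iff₀ (by positivity)]
      exact h n
    exact (hn.trans_le ((pow_le_pow_right₀ hab.le n.lt_two_pow_self.le).trans hC)).false

namespace IsAAdjoint

variable {A T S T' S' P : H →L[ℂ] H}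

lemma inner_apply (hA : IsSelfAdjoint A) (h : IsAAdjoint A T S) (x y : H) :
    ⟪A (T x), y⟫_ℂ = ⟪A x, S y⟫_ℂ :=
  calc ⟪A (T x), y⟫_ℂ = ⟪T x, A y⟫_ℂ := by rw [← adjoint_inner_right, hA.adjoint_eq]
    _ = ⟪x, (adjoint T ∘L A) y⟫_ℂ := by rw [comp_apply, adjoint_inner_right]
    _ = ⟪A x, S y⟫_ℂ := by rw [← h, comp_apply, ← adjoint_inner_right, hA.adjoint_eq]

lemma symm (hA : IsSelfAdjoint A) (h : IsAAdjoint A T S) : IsAAdjoint A S T := by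
  ext1 x
  refine ext_inner_right ℂ fun y => ?_
  rw [comp_apply, comp_apply, adjoint_inner_left, h.inner_apply hA]

lemma add (h : IsAAdjoint A T S) (h' : IsAAdjoint A T' S') : IsAAdjoint A (T + T') (S + S') := by
  rw [IsAAdjoint, comp_add, h, h', map_add, add_comp]

lemma sub (h : IsAAdjoint A T S) (h' : IsAAdjoint A T' S') : IsAAdjoint A (T - T') (S - S') := by
  rw [IsAAdjoint, comp_sub, h, h', map_sub, sub_comp]

lemma comp (h : IsAAdjoint A T S) (h' : IsAAdjoint A T' S') :
    IsAAdjoint A (T ∘L T') (S' ∘L S) := by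
  rw [IsAAdjoint, ← comp_assoc, h', comp_assoc, h, ← comp_assoc, adjoint_comp]

lemma pow (h : IsAAdjoint A P P) (n : ℕ) : IsAAdjoint A (P ^ n) (P ^ n) := by
  induction n with
  | zero => simp [IsAAdjoint, ← mul_def, adjoint_one]
  | succ n ih =>
    have := ih.comp h
    rwa [← mul_def, ← mul_def, ← pow_succ, ← pow_succ'] at this

lemma aNorm_apply_sq_le (hA : A.IsPositive) (h : IsAAdjoint A T S) (x : H) :
    aNorm A (T x) ^ 2 ≤ aNorm A x * aNorm A (S (T x)) := by
  rw [aNorm_sq hA, h.inner_apply hA.isSelfAdjoint]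
  exact (Complex.re_le_norm _).trans (norm_inner_le_aNorm_mul_aNorm hA _ _)

-- `‖Px‖_A ^ 2 ^ n ≤ ‖x‖_A ^ (2 ^ n - 1) * ‖P ^ 2 ^ n x‖_A`, multiplied through by `‖x‖_A`.
lemma aNorm_apply_pow_two_pow_mul_le (hA : A.IsPositive) (hP : IsAAdjoint A P P) {x : H}
    (hx : 0 < aNorm A x) (n : ℕ) :
    aNorm A (P x) ^ 2 ^ n * aNorm A x ≤ aNorm A ((P ^ 2 ^ n) x) * aNorm A x ^ 2 ^ n := by
  induction n with
  | zero => simp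
  | succ k ih =>
    set c := aNorm A x
    have hP2 : (P ^ 2 ^ (k + 1)) x = (P ^ 2 ^ k) ((P ^ 2 ^ k) x) := by
      rw [pow_succ, mul_two, pow_add, mul_apply_eq_comp]
    have hsq : aNorm A ((P ^ 2 ^ k) x) ^ 2 ≤ c * aNorm A ((P ^ 2 ^ (k + 1)) x) :=
      hP2 ▸ (hP.pow (2 ^ k)).aNorm_apply_sq_le hA x
    have h2 : 2 ^ (k + 1) = 2 ^ k + 2 ^ k := by ring
    refine le_of_mul_le_mul_right ?_ hx
    calc aNorm A (P x) ^ 2 ^ (k + 1) * c * c = (aNorm A (P x) ^ 2 ^ k * c) ^ 2 := by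
          rw [h2]; ring
      _ ≤ (aNorm A ((P ^ 2 ^ k) x) * c ^ 2 ^ k) ^ 2 := by
          gcongr
          exact mul_nonneg (pow_nonneg (aNorm_nonneg A _) _) hx.le
      _ = aNorm A ((P ^ 2 ^ k) x) ^ 2 * c ^ 2 ^ (k + 1) := by rw [h2]; ring
      _ ≤ c * aNorm A ((P ^ 2 ^ (k + 1)) x) * c ^ 2 ^ (k + 1) := by gcongr
      _ = aNorm A ((P ^ 2 ^ (k + 1)) x) * c ^ 2 ^ (k + 1) * c := by ring

lemma aNorm_apply_le_of_self (hA : A.IsPositive) (hP : IsAAdjoint A P P) (x : H) :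
    aNorm A (P x) ≤ ‖P‖ * aNorm A x := by
  rcases (aNorm_nonneg A x).eq_or_lt with hx | hx
  · have := hP.aNorm_apply_sq_le hA x
    rw [← hx, zero_mul] at this
    rw [← hx, mul_zero]
    nlinarith
  refine le_of_forall_pow_two_pow_le_mul_pow (C := ‖CFC.sqrt A‖ * ‖x‖ / aNorm A x)
    (mul_nonneg (norm_nonneg P) hx.le) fun n => ?_
  have hpow : aNorm A ((P ^ 2 ^ n) x) ≤ ‖CFC.sqrt A‖ * ‖x‖ * ‖P‖ ^ 2 ^ n :=
    calc aNorm A ((P ^ 2 ^ n) x) ≤ ‖CFC.sqrt A‖ * (‖P ^ 2 ^ n‖ * ‖x‖) :=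
          (aNorm_le_norm_sqrt_mul_norm hA _).trans (by gcongr; exact le_opNorm _ _)
      _ ≤ ‖CFC.sqrt A‖ * (‖P‖ ^ 2 ^ n * ‖x‖) := by gcongr; exact norm_pow_le' P (by positivity)
      _ = ‖CFC.sqrt A‖ * ‖x‖ * ‖P‖ ^ 2 ^ n := by ring
  rw [div_mul_eq_mul_div, le_div_iff₀ hx, mul_pow]
  calc aNorm A (P x) ^ 2 ^ n * aNorm A x ≤ aNorm A ((P ^ 2 ^ n) x) * aNorm A x ^ 2 ^ n :=
        hP.aNorm_apply_pow_two_pow_mul_le hA hx n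
    _ ≤ ‖CFC.sqrt A‖ * ‖x‖ * ‖P‖ ^ 2 ^ n * aNorm A x ^ 2 ^ n := by gcongr
    _ = ‖CFC.sqrt A‖ * ‖x‖ * (‖P‖ ^ 2 ^ n * aNorm A x ^ 2 ^ n) := by ring

lemma isABounded (hA : A.IsPositive) (h : IsAAdjoint A T S) : IsABounded A T := by
  have hST : IsAAdjoint A (S ∘L T) (S ∘L T) := (h.symm hA.isSelfAdjoint).comp h
  refine ⟨√‖S ∘L T‖, fun x => le_of_pow_le_pow_left₀ two_ne_zero
    (mul_nonneg (Real.sqrt_nonneg _) (aNorm_nonneg A x)) ?_⟩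
  calc aNorm A (T x) ^ 2 ≤ aNorm A x * aNorm A (S (T x)) := h.aNorm_apply_sq_le hA x
    _ ≤ aNorm A x * (‖S ∘L T‖ * aNorm A x) :=
        mul_le_mul_of_nonneg_left (hST.aNorm_apply_le_of_self hA x) (aNorm_nonneg A x)
    _ = (√‖S ∘L T‖ * aNorm A x) ^ 2 := by rw [mul_pow, Real.sq_sqrt (norm_nonneg _)]; ring

end IsAAdjoint

namespace IsABounded

variable {A T T' : H →L[ℂ] H}

lemma le_aOpNorm_of_mem (hA : A.IsPositive) (hT : IsABounded A T) {y : H}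
    (hy : y ∈ closure (Set.range A)) : aNorm A (T y) ≤ aOpNorm A T * aNorm A y := by
  obtain ⟨C, hC⟩ := hT
  rcases (aNorm_nonneg A y).eq_or_lt with hy0 | hy0
  · simpa [← hy0] using hC y
  have hbdd : BddAbove {r | ∃ x ∈ closure (Set.range A), aNorm A x = 1 ∧ r = aNorm A (T x)} :=
    ⟨C, by rintro r ⟨x, -, hx, rfl⟩; simpa [hx] using hC x⟩
  have hunit : aNorm A ((aNorm A y : ℂ)⁻¹ • y) = 1 := by
    rw [aNorm_smul hA, norm_inv, Complex.norm_real, Real.norm_of_nonneg hy0.le,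
      inv_mul_cancel₀ hy0.ne']
  have := le_csSup hbdd ⟨_, smul_mem_closure_range A _ hy, hunit, rfl⟩
  rw [map_smul, aNorm_smul hA, norm_inv, Complex.norm_real, Real.norm_of_nonneg hy0.le,
    inv_mul_le_iff₀ hy0] at this
  rw [mul_comm]
  exact this

lemma le_aOpNorm (hA : A.IsPositive) (hT : IsABounded A T) (x : H) :
    aNorm A (T x) ≤ aOpNorm A T * aNorm A x := by
  obtain ⟨y, hy, z, hz, rfl⟩ := hA.isSelfAdjoint.exists_mem_closure_range_add x
  have hTz : aNorm A (T z) = 0 := by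
    obtain ⟨C, hC⟩ := hT
    refine le_antisymm ?_ (aNorm_nonneg A _)
    simpa [aNorm, hz] using hC z
  calc aNorm A (T (y + z)) ≤ aNorm A (T y) := by
        simpa [hTz] using aNorm_add_le hA (T y) (T z)
    _ ≤ aOpNorm A T * aNorm A (y + z) := by
        rw [aNorm_add_of_apply_eq_zero hA.isSelfAdjoint y hz]
        exact hT.le_aOpNorm_of_mem hA hy

lemma aNorm_apply_apply_le (hA : A.IsPositive) (hT : IsABounded A T) (hT' : IsABounded A T')
    (x : H) : aNorm A (T (T' x)) ≤ aOpNorm A T * aOpNorm A T' * aNorm A x :=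
  calc aNorm A (T (T' x)) ≤ aOpNorm A T * aNorm A (T' x) := hT.le_aOpNorm hA _
    _ ≤ aOpNorm A T * (aOpNorm A T' * aNorm A x) :=
        mul_le_mul_of_nonneg_left (hT'.le_aOpNorm hA x) (aOpNorm_nonneg A T)
    _ = aOpNorm A T * aOpNorm A T' * aNorm A x := by ring

end IsABounded

section

variable {A : H →L[ℂ] H}

lemma IsAAdjoint.aOpNorm_le (hA : A.IsPositive) {T S : H →L[ℂ] H} (h : IsAAdjoint A T S) :
    aOpNorm A S ≤ aOpNorm A T := by
  refine aOpNorm_le_bound (aOpNorm_nonneg A T) fun x => ?_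
  have hsq : aNorm A (S x) ^ 2 ≤ aNorm A x * (aOpNorm A T * aNorm A (S x)) :=
    ((h.symm hA.isSelfAdjoint).aNorm_apply_sq_le hA x).trans
      (mul_le_mul_of_nonneg_left ((h.isABounded hA).le_aOpNorm hA _) (aNorm_nonneg A x))
  nlinarith [mul_nonneg (aNorm_nonneg A x) (aOpNorm_nonneg A T)]

lemma aOpNorm_comp_add_comp_le (hA : A.IsPositive) {X Y X' Y' : H →L[ℂ] H}
    (hXp : IsABounded A (X + X')) (hYp : IsABounded A (Y + Y'))
    (hXm : IsABounded A (X - X')) (hYm : IsABounded A (Y - Y')) :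
    aOpNorm A (X ∘L Y + X' ∘L Y') ≤
      (aOpNorm A (X + X') * aOpNorm A (Y + Y') + aOpNorm A (X - X') * aOpNorm A (Y - Y')) / 2 := by
  have h0 := aOpNorm_nonneg A
  refine aOpNorm_le_bound (div_nonneg (add_nonneg (mul_nonneg (h0 _) (h0 _))
    (mul_nonneg (h0 _) (h0 _))) zero_le_two) fun x => ?_
  have hx : (X ∘L Y + X' ∘L Y') x =
      (2⁻¹ : ℂ) • ((X + X') ((Y + Y') x) + (X - X') ((Y - Y') x)) := by
    simp only [add_apply, sub_apply, comp_apply, map_add, map_sub]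
    module
  rw [hx]
  calc aNorm A ((2⁻¹ : ℂ) • ((X + X') ((Y + Y') x) + (X - X') ((Y - Y') x)))
      ≤ 2⁻¹ * (aNorm A ((X + X') ((Y + Y') x)) + aNorm A ((X - X') ((Y - Y') x))) := by
        rw [aNorm_smul hA, norm_inv, Complex.norm_ofNat]
        gcongr
        exact aNorm_add_le hA _ _
    _ ≤ 2⁻¹ * (aOpNorm A (X + X') * aOpNorm A (Y + Y') * aNorm A x +
          aOpNorm A (X - X') * aOpNorm A (Y - Y') * aNorm A x) := by
        gcongr
        exacts [hXp.aNorm_apply_apply_le hA hYp x, hXm.aNorm_apply_apply_le hA hYm x]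
    _ = _ := by ring

end

theorem stmt10_general (A T1 T2 S1 S2 : H →L[ℂ] H) (hA : A.IsPositive)
    (hS1 : A ∘L S1 = (ContinuousLinearMap.adjoint T1) ∘L A)
    (hS2 : A ∘L S2 = (ContinuousLinearMap.adjoint T2) ∘L A) :
    max ((aOpNorm A (T1 + T2)) ^ 2) ((aOpNorm A (T1 - T2)) ^ 2) ≥
      max (aOpNorm A (T1 ∘L T1 + T2 ∘L T2))
          (max (aOpNorm A (S1 ∘L T1 + S2 ∘L T2)) (aOpNorm A (T1 ∘L S1 + T2 ∘L S2))) +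
        |(aOpNorm A (T1 + T2)) ^ 2 - (aOpNorm A (T1 - T2)) ^ 2| / 2 := by
  have hU : IsAAdjoint A (T1 + T2) (S1 + S2) := IsAAdjoint.add hS1 hS2
  have hV : IsAAdjoint A (T1 - T2) (S1 - S2) := IsAAdjoint.sub hS1 hS2
  have bU := hU.isABounded hA
  have bV := hV.isABounded hA
  have bSU := (hU.symm hA.isSelfAdjoint).isABounded hA
  have bSV := (hV.symm hA.isSelfAdjoint).isABounded hA
  have hSU := hU.aOpNorm_le hA
  have hSV := hV.aOpNorm_le hA
  set a := aOpNorm A (T1 + T2)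
  set b := aOpNorm A (T1 - T2)
  have ha : 0 ≤ a := aOpNorm_nonneg A _
  have hb : 0 ≤ b := aOpNorm_nonneg A _
  have hTT : aOpNorm A (T1 ∘L T1 + T2 ∘L T2) ≤ (a ^ 2 + b ^ 2) / 2 :=
    (aOpNorm_comp_add_comp_le hA bU bU bV bV).trans_eq (by ring)
  have hST : aOpNorm A (S1 ∘L T1 + S2 ∘L T2) ≤ (a ^ 2 + b ^ 2) / 2 :=
    (aOpNorm_comp_add_comp_le hA bSU bU bSV bV).trans (by rw [sq, sq]; gcongr)
  have hTS : aOpNorm A (T1 ∘L S1 + T2 ∘L S2) ≤ (a ^ 2 + b ^ 2) / 2 :=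
    (aOpNorm_comp_add_comp_le hA bU bSU bV bSV).trans (by rw [sq, sq]; gcongr)
  linarith [max_le hTT (max_le hST hTS), max_sub_min_eq_abs' (a ^ 2) (b ^ 2),
    min_add_max (a ^ 2) (b ^ 2)]

theorem stmt10 (A T1 T2 S1 S2 : H →L[ℂ] H) (hA : A.IsPositive)
    (hS1 : A ∘L S1 = (ContinuousLinearMap.adjoint T1) ∘L A)
    (hS1r : Set.range (⇑S1) ⊆ closure (Set.range (⇑A)))
    (hS2 : A ∘L S2 = (ContinuousLinearMap.adjoint T2) ∘L A)
    (hS2r : Set.range (⇑S2) ⊆ closure (Set.range (⇑A))) :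
    max ((aOpNorm A (T1 + T2)) ^ 2) ((aOpNorm A (T1 - T2)) ^ 2) ≥
      max (aOpNorm A (T1 ∘L T1 + T2 ∘L T2))
          (max (aOpNorm A (S1 ∘L T1 + S2 ∘L T2)) (aOpNorm A (T1 ∘L S1 + T2 ∘L S2))) +
        |(aOpNorm A (T1 + T2)) ^ 2 - (aOpNorm A (T1 - T2)) ^ 2| / 2 :=
  stmt10_general A T1 T2 S1 S2 hA hS1 hS2
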